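/- Let b be an unlooped vertex of degree one in a vertex-weighted graph G, pendant on an (arbitrary) vertex a ≠ b. Let G′ be obtained from G−b by changing the weights of a to α′(a) = α(a)β(b) and β′(a) = α(a)α(b)(x−1)² + β(a)α(b)(y−1) + β(a)β(b). Then q(G) = q(G′). -/

import Mathlib

open Finset

/-- GF(2) rank of the adjacency matrix of the induced subgraph on `S`. -/
noncomputable def mrank {V : Type} [Fintype V] [DecidableEq V]
    (M : Matrix V V (ZMod 2)) (S : Finset V) : ℕ :=
  (Matrix.of (fun i j : {v // v ∈ S} => M i.1 j.1)).rank

/-- The weighted interlace polynomial of the graph with adjacency matrix `M`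
restricted to the vertex set `U`, with vertex weights `α`, `β`, evaluated at `x`, `y`. -/
noncomputable def interlaceQ {V : Type} [Fintype V] [DecidableEq V]
    {R : Type} [CommRing R] (M : Matrix V V (ZMod 2)) (U : Finset V)
    (α β : V → R) (x y : R) : R :=
  ∑ S ∈ U.powerset, (∏ s ∈ S, α s) * (∏ v ∈ U \ S, β v) *
    (x - 1) ^ mrank M S * (y - 1) ^ (S.card - mrank M S)

/-- Local complementation at `a`: toggle adjacencies (including loops) among
neighbors of `a` distinct from `a`. -/
def localComp {V : Type} [DecidableEq V] (M : Matrix V V (ZMod 2)) (a : V) :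
    Matrix V V (ZMod 2) :=
  fun i j => if i = a ∨ j = a then M i j else M i j + M i a * M j a

/-- Pivot at the edge `ab`. -/
def pivot {V : Type} [DecidableEq V] (M : Matrix V V (ZMod 2)) (a b : V) :
    Matrix V V (ZMod 2) :=
  fun i j => if i = a ∨ i = b ∨ j = a ∨ j = b then M i j
    else M i j + M i a * M j b + M i b * M j a

section Aux

open Finset Matrix LinearMap


/-- linear equiv between a product of submodules and the submodule product. -/
def prodSubmoduleEquiv {R M N : Type*} [Ring R] [AddCommGroup M] [AddCommGroup N]
    [Module R M] [Module R N] (p : Submodule R M) (q : Submodule R N) :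
    (p.prod q) ≃ₗ[R] p × q where
  toFun x := (⟨x.1.1, x.2.1⟩, ⟨x.1.2, x.2.2⟩)
  map_add' _ _ := rfl
  map_smul' _ _ := rfl
  invFun y := ⟨(y.1.1, y.2.1), ⟨y.1.2, y.2.2⟩⟩
  left_inv _ := rfl
  right_inv _ := rfl

lemma myrange_prodMap {R M N M' N' : Type*} [Ring R] [AddCommGroup M] [AddCommGroup N]
    [AddCommGroup M'] [AddCommGroup N'] [Module R M] [Module R N] [Module R M'] [Module R N']
    (f : M →ₗ[R] M') (g : N →ₗ[R] N') :
    range (f.prodMap g) = (range f).prod (range g) := by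
  ext ⟨u, v⟩
  simp only [mem_range, Submodule.mem_prod]
  constructor
  · rintro ⟨⟨x, y⟩, h⟩
    obtain ⟨h1, h2⟩ := Prod.mk.injEq .. ▸ h
    exact ⟨⟨x, h1⟩, ⟨y, h2⟩⟩
  · rintro ⟨⟨x, hx⟩, ⟨y, hy⟩⟩; exact ⟨(x, y), Prod.ext hx hy⟩

lemma rank_fromBlocks_diag {K : Type*} [Field K] {m n m' n' : Type*}
    [Fintype m] [Fintype n] [Fintype m'] [Fintype n'] [DecidableEq m] [DecidableEq n]
    (A : Matrix m' m K) (D : Matrix n' n K) :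
    (Matrix.fromBlocks A 0 0 D).rank = A.rank + D.rank := by
  have h : (Matrix.fromBlocks A 0 0 D).mulVecLin =
      (((LinearEquiv.sumArrowLequivProdArrow m' n' K K).symm : ((m' → K) × (n' → K)) →ₗ[K] (m' ⊕ n' → K)) ∘ₗ
        ((A.mulVecLin.prodMap D.mulVecLin) ∘ₗ
          ((LinearEquiv.sumArrowLequivProdArrow m n K K : (m ⊕ n → K) →ₗ[K] ((m → K) × (n → K)))))) := by
    apply LinearMap.ext; intro x; funext i
    cases i <;>
      simp [Matrix.mulVecLin_apply, Matrix.fromBlocks_mulVec, LinearEquiv.sumArrowLequivProdArrow,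
        Equiv.sumArrowEquivProdArrow, Matrix.zero_mulVec]
  rw [Matrix.rank, h, LinearMap.range_comp, LinearMap.range_comp_of_range_eq_top _ (LinearEquiv.range _),
    LinearEquiv.finrank_map_eq, myrange_prodMap,
    (prodSubmoduleEquiv _ _).finrank_eq, Module.finrank_prod, Matrix.rank, Matrix.rank]

variable {V : Type} [Fintype V] [DecidableEq V]

def insertEquiv (S : Finset V) (b : V) (hb : b ∉ S) :
    ({v // v ∈ S} ⊕ Unit) ≃ {v // v ∈ insert b S} where
  toFun := Sum.elim (fun x => ⟨x.1, Finset.mem_insert_of_mem x.2⟩)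
    (fun _ => ⟨b, Finset.mem_insert_self b S⟩)
  invFun x := if h : x.1 ∈ S then Sum.inl ⟨x.1, h⟩ else Sum.inr ()
  left_inv := by rintro (x | ⟨⟩) <;> simp [hb]
  right_inv := by
    rintro ⟨v, hv⟩
    rcases Finset.mem_insert.mp hv with h | h
    · subst h; simp [hb]
    · simp [h]

def insert2Equiv (S : Finset V) (a b : V) (ha : a ∉ S) (hb : b ∉ S) (hab : a ≠ b) :
    ({v // v ∈ S} ⊕ Bool) ≃ {v // v ∈ insert a (insert b S)} where
  toFun := Sum.elim
    (fun x => ⟨x.1, Finset.mem_insert_of_mem (Finset.mem_insert_of_mem x.2)⟩)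
    (fun c => if c then ⟨a, Finset.mem_insert_self a _⟩
      else ⟨b, Finset.mem_insert_of_mem (Finset.mem_insert_self b S)⟩)
  invFun x := if h : x.1 ∈ S then Sum.inl ⟨x.1, h⟩
    else if x.1 = a then Sum.inr true else Sum.inr false
  left_inv := by
    rintro (x | c)
    · simp [x.2]
    · cases c <;> simp [ha, hb, hab, hab.symm]
  right_inv := by
    rintro ⟨v, hv⟩
    rcases Finset.mem_insert.mp hv with h | h
    · subst h; simp [ha]
    · rcases Finset.mem_insert.mp h with h | h
      · subst h; simp [hb, Ne.symm hab]
      · simp [h]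

lemma mrank_le_card (M : Matrix V V (ZMod 2)) (S : Finset V) : mrank M S ≤ S.card := by
  simpa [mrank, Fintype.card_coe] using
    Matrix.rank_le_card_width (Matrix.of (fun i j : {v // v ∈ S} => M i.1 j.1))

lemma rank_fromBlocks_diag' {K : Type*} [Field K] {m n m' n' : Type*}
    [Fintype m] [Fintype n] [Fintype m'] [Fintype n'] [DecidableEq m] [DecidableEq n]
    (A : Matrix m' m K) (D : Matrix n' n K) :
    (Matrix.fromBlocks A 0 0 D).rank = A.rank + D.rank :=
  rank_fromBlocks_diag A D

lemma mrank_insert_zero (M : Matrix V V (ZMod 2)) (b : V) (S : Finset V) (hbS : b ∉ S)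
    (hbb : M b b = 0) (h0 : ∀ v ∈ S, M b v = 0) (h0' : ∀ v ∈ S, M v b = 0) :
    mrank M (insert b S) = mrank M S := by
  classical
  set A : Matrix {v // v ∈ S} {v // v ∈ S} (ZMod 2) := Matrix.of fun i j => M i.1 j.1 with hA
  set N : Matrix {v // v ∈ insert b S} {v // v ∈ insert b S} (ZMod 2) :=
    Matrix.of fun i j => M i.1 j.1 with hN
  let e := insertEquiv S b hbS
  have hsub : N.submatrix e e = Matrix.fromBlocks A 0 0 (0 : Matrix Unit Unit (ZMod 2)) := by
    ext i j
    rcases i with i | i <;> rcases j with j | j <;>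
      simp [e, insertEquiv, hA, hN, h0, h0', hbb]
  calc mrank M (insert b S) = N.rank := rfl
    _ = (N.submatrix e e).rank := (Matrix.rank_submatrix N e e).symm
    _ = A.rank + (0 : Matrix Unit Unit (ZMod 2)).rank := by
        rw [hsub, rank_fromBlocks_diag']
    _ = mrank M S := by rw [Matrix.rank_zero, add_zero]; rfl

lemma zmod2_add_self (z : ZMod 2) : z + z = 0 := by revert z; decide

lemma mrank_pendant (M : Matrix V V (ZMod 2)) (hs : ∀ i j, M i j = M j i)
    (a b : V) (S : Finset V) (hab : a ≠ b) (haS : a ∉ S) (hbS : b ∉ S)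
    (hbb : M b b = 0) (hba : M b a = 1) (h0 : ∀ v ∈ S, M b v = 0) :
    mrank M (insert a (insert b S)) = mrank M S + 2 := by
  classical
  set T := insert a (insert b S) with hT
  set A : Matrix {v // v ∈ S} {v // v ∈ S} (ZMod 2) := Matrix.of fun i j => M i.1 j.1 with hA
  set N : Matrix {v // v ∈ T} {v // v ∈ T} (ZMod 2) := Matrix.of fun i j => M i.1 j.1 with hN
  let e := insert2Equiv S a b haS hbS hab
  set bb : {v // v ∈ T} := ⟨b, Finset.mem_insert_of_mem (Finset.mem_insert_self b S)⟩ with hbbdef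
  set f : {v // v ∈ T} → ZMod 2 := fun i => if i = bb then 0 else M i.1 a with hf
  set E : Matrix {v // v ∈ T} {v // v ∈ T} (ZMod 2) :=
    Matrix.of (fun i j => if j = bb then f i else 0) with hE
  set L : Matrix {v // v ∈ T} {v // v ∈ T} (ZMod 2) := 1 + E with hL
  have hfbb : f bb = 0 := by simp [hf]
  have hEE : E * E = 0 := by
    ext i j
    rw [Matrix.mul_apply]
    refine Finset.sum_eq_zero fun k _ => ?_
    by_cases hk : k = bb
    · subst hk; simp [hE, hfbb]
    · simp [hE, hk]
  have hEadd : E + E = 0 := by ext i j; exact zmod2_add_self _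
  have hLL : L * L = 1 := by
    rw [hL, add_mul, one_mul, mul_add, mul_one, hEE, add_zero, add_assoc, hEadd, add_zero]
  have hdetL : IsUnit L.det :=
    IsUnit.of_mul_eq_one (a := L.det) L.det (by rw [← Matrix.det_mul, hLL, Matrix.det_one])
  have hEN : E * N = Matrix.of fun i j => f i * M b j.1 := by
    ext i j
    rw [Matrix.mul_apply, Finset.sum_eq_single bb]
    · simp [hE, hN, hbbdef]
    · intro k _ hk; simp [hE, hk]
    · intro h; exact absurd (Finset.mem_univ bb) h
  have hNEt : N * Eᵀ = Matrix.of fun i j => M i.1 b * f j := by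
    ext i j
    rw [Matrix.mul_apply, Finset.sum_eq_single bb]
    · simp [hE, hN, hbbdef]
    · intro k _ hk; simp [hE, hk]
    · intro h; exact absurd (Finset.mem_univ bb) h
  have hENEt : E * N * Eᵀ = 0 := by
    rw [hEN]
    ext i j
    rw [Matrix.mul_apply, Finset.sum_eq_single bb]
    · simp [hE, hbb, hbbdef]
    · intro k _ hk; simp [hE, hk]
    · intro h; exact absurd (Finset.mem_univ bb) h
  have hK : L * N * Lᵀ = Matrix.of fun i j => M i.1 j.1 + f i * M b j.1 + M i.1 b * f j := by
    have ht : Lᵀ = 1 + Eᵀ := by rw [hL, Matrix.transpose_add, Matrix.transpose_one]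
    rw [hL, ht, add_mul, one_mul, mul_add, Matrix.mul_one, add_mul, hENEt, add_zero, hEN, hNEt]
    ext i j
    simp [hN, add_assoc]
  have hSb : ∀ v ∈ S, v ≠ b := fun v hv h => hbS (h ▸ hv)
  have hSa : ∀ v ∈ S, v ≠ a := fun v hv h => haS (h ▸ hv)
  have hvb : ∀ v ∈ S, M v b = 0 := fun v hv => (hs v b).trans (h0 v hv)
  have hMab : M a b = 1 := (hs a b).trans hba
  have hsva : ∀ v, M v a = M a v := fun v => hs v a
  set D : Matrix Bool Bool (ZMod 2) :=
    Matrix.of (fun i j => if i && j then M a a else if i = j then 0 else 1) with hD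
  set D' : Matrix Bool Bool (ZMod 2) :=
    Matrix.of (fun i j => if i && j then 0 else if i = j then M a a else 1) with hD'
  have hDD' : D * D' = 1 := by
    ext i j
    cases i <;> cases j <;>
      simp [hD, hD', Matrix.mul_apply, Fintype.sum_bool, Matrix.one_apply, zmod2_add_self]
  have hDdet : IsUnit D.det :=
    IsUnit.of_mul_eq_one (a := D.det) D'.det (by rw [← Matrix.det_mul, hDD', Matrix.det_one])
  have hDrank : D.rank = 2 := by
    rw [Matrix.rank_of_isUnit D ((Matrix.isUnit_iff_isUnit_det D).mpr hDdet)]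
    simp
  have hsub : (L * N * Lᵀ).submatrix e e = Matrix.fromBlocks A 0 0 D := by
    rw [hK]
    ext i j
    rcases i with i | i <;> rcases j with j | j
    · simp [e, insert2Equiv, hA, hf, h0, hvb]
    · cases j <;>
        simp [e, insert2Equiv, hD, hf, hbbdef, hSb, hvb, hbb, hfbb, hba, hMab, zmod2_add_self]
    · cases i <;>
        simp [e, insert2Equiv, hD, hf, hbbdef, hSb, hvb, hbb, hfbb, hba, hMab, hsva, h0,
          zmod2_add_self]
    · cases i <;> cases j <;>
        simp [e, insert2Equiv, hD, hf, hbbdef, hbb, hfbb, hba, hMab, hab, zmod2_add_self]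
  calc mrank M T = N.rank := rfl
    _ = (L * N).rank := (Matrix.rank_mul_eq_right_of_isUnit_det L N hdetL).symm
    _ = (L * N * Lᵀ).rank :=
        (Matrix.rank_mul_eq_left_of_isUnit_det Lᵀ (L * N) (by rwa [Matrix.det_transpose])).symm
    _ = ((L * N * Lᵀ).submatrix e e).rank := (Matrix.rank_submatrix _ e e).symm
    _ = (Matrix.fromBlocks A 0 0 D).rank := by rw [hsub]
    _ = A.rank + D.rank := rank_fromBlocks_diag' A D
    _ = mrank M S + 2 := by rw [hDrank]; rfl

end Aux

theorem pendant_reduction {V : Type} [Fintype V] [DecidableEq V]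
    {R : Type} [CommRing R] (M : Matrix V V (ZMod 2)) (hM : M.IsSymm)
    (α β : V → R) (x y : R) (a b : V) (hab : a ≠ b)
    (hb : M b b = 0) (hadj : M b a = 1)
    (hdeg : ∀ v : V, v ≠ a → M b v = 0) :
    interlaceQ M Finset.univ α β x y =
      interlaceQ M (Finset.univ.erase b)
        (Function.update α a (α a * β b))
        (Function.update β a
          (α a * α b * (x - 1) ^ 2 + β a * α b * (y - 1) + β a * β b)) x y := by
  classical
  have hs : ∀ i j, M i j = M j i := fun i j => congrFun (congrFun hM j) i
  set W : Finset V := (Finset.univ.erase b).erase a with hW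
  have haW : a ∉ W := Finset.notMem_erase a _
  have hbW : b ∉ W := fun h => Finset.notMem_erase b _ (Finset.mem_of_mem_erase h)
  have hU' : Finset.univ.erase b = insert a W :=
    (Finset.insert_erase (Finset.mem_erase.mpr ⟨hab, Finset.mem_univ a⟩)).symm
  have hUniv : (Finset.univ : Finset V) = insert b (insert a W) := by
    rw [← hU', Finset.insert_erase (Finset.mem_univ b)]
  have hbiW : b ∉ insert a W := by rw [← hU']; exact Finset.notMem_erase b _
  set α' : V → R := Function.update α a (α a * β b) with hα'
  set β' : V → R := Function.update β a
    (α a * α b * (x - 1) ^ 2 + β a * α b * (y - 1) + β a * β b) with hβ'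
  set f : Finset V → R := fun S => (∏ s ∈ S, α s) * (∏ v ∈ Finset.univ \ S, β v) *
    (x - 1) ^ mrank M S * (y - 1) ^ (S.card - mrank M S) with hfdef
  set g : Finset V → R := fun S => (∏ s ∈ S, α' s) * (∏ v ∈ Finset.univ.erase b \ S, β' v) *
    (x - 1) ^ mrank M S * (y - 1) ^ (S.card - mrank M S) with hgdef
  have hL : interlaceQ M Finset.univ α β x y = ∑ S₀ ∈ W.powerset,
      (f S₀ + f (insert a S₀) + (f (insert b S₀) + f (insert b (insert a S₀)))) := by
    rw [interlaceQ]
    show (∑ S ∈ Finset.univ.powerset, f S) = _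
    rw [hUniv, Finset.sum_powerset_insert hbiW, Finset.sum_powerset_insert haW,
      Finset.sum_powerset_insert haW, ← Finset.sum_add_distrib, ← Finset.sum_add_distrib,
      ← Finset.sum_add_distrib]
  have hR : interlaceQ M (Finset.univ.erase b) α' β' x y = ∑ S₀ ∈ W.powerset,
      (g S₀ + g (insert a S₀)) := by
    rw [interlaceQ]
    show (∑ S ∈ (Finset.univ.erase b).powerset, g S) = _
    rw [hU', Finset.sum_powerset_insert haW, ← Finset.sum_add_distrib]
  rw [hL, hR]
  refine Finset.sum_congr rfl fun S₀ hS₀ => ?_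
  have hS₀W : S₀ ⊆ W := Finset.mem_powerset.mp hS₀
  have hSa : ∀ v ∈ S₀, v ≠ a := fun v hv => Finset.ne_of_mem_erase (hS₀W hv)
  have hSb : ∀ v ∈ S₀, v ≠ b :=
    fun v hv => Finset.ne_of_mem_erase (Finset.mem_of_mem_erase (hS₀W hv))
  have ha0 : a ∉ S₀ := fun h => hSa a h rfl
  have hb0 : b ∉ S₀ := fun h => hSb b h rfl
  have hbA : b ∉ insert a S₀ :=
    fun h => (Finset.mem_insert.mp h).elim (fun h' => hab h'.symm) hb0
  have hbnW : b ∉ W \ S₀ := fun h => hbW (Finset.mem_sdiff.mp h).1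
  have hanW : a ∉ W \ S₀ := fun h => haW (Finset.mem_sdiff.mp h).1
  have hbiaW : b ∉ insert a (W \ S₀) :=
    fun h => (Finset.mem_insert.mp h).elim (fun h' => hab h'.symm) hbnW
  -- ranks
  have hrb : mrank M (insert b S₀) = mrank M S₀ :=
    mrank_insert_zero M b S₀ hb0 hb (fun v hv => hdeg v (hSa v hv))
      (fun v hv => (hs v b).trans (hdeg v (hSa v hv)))
  have hrab : mrank M (insert b (insert a S₀)) = mrank M S₀ + 2 := by
    rw [← Finset.insert_comm]
    exact mrank_pendant M hs a b S₀ hab ha0 hb0 hb hadj (fun v hv => hdeg v (hSa v hv))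
  have hr0n : mrank M S₀ ≤ S₀.card := mrank_le_card M S₀
  -- cards
  have hca : (insert a S₀).card = S₀.card + 1 := Finset.card_insert_of_notMem ha0
  have hcb : (insert b S₀).card = S₀.card + 1 := Finset.card_insert_of_notMem hb0
  have hcab : (insert b (insert a S₀)).card = S₀.card + 2 := by
    rw [Finset.card_insert_of_notMem hbA, hca]
  -- sdiffs
  have hd1 : Finset.univ \ S₀ = insert b (insert a (W \ S₀)) := by
    ext v
    simp only [hW, Finset.mem_sdiff, Finset.mem_insert, Finset.mem_erase, Finset.mem_univ,
      true_and, and_true]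
    by_cases hvb : v = b
    · simp [hvb, hb0]
    · by_cases hva : v = a
      · simp [hva, ha0, hvb, hab, Ne.symm hab]
      · simp [hva, hvb]
  have hd2 : Finset.univ \ (insert a S₀) = insert b (W \ S₀) := by
    ext v
    simp only [hW, Finset.mem_sdiff, Finset.mem_insert, Finset.mem_erase, Finset.mem_univ,
      true_and, and_true]
    by_cases hvb : v = b
    · simp [hvb, hb0, Ne.symm hab]
    · by_cases hva : v = a
      · simp [hva, hvb, hab]
      · simp [hva, hvb]
  have hd3 : Finset.univ \ (insert b S₀) = insert a (W \ S₀) := by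
    ext v
    simp only [hW, Finset.mem_sdiff, Finset.mem_insert, Finset.mem_erase, Finset.mem_univ,
      true_and, and_true]
    by_cases hva : v = a
    · simp [hva, ha0, hab]
    · by_cases hvb : v = b
      · simp [hvb, hva, Ne.symm hab]
      · simp [hva, hvb]
  have hd4 : Finset.univ \ (insert b (insert a S₀)) = W \ S₀ := by
    ext v
    simp only [hW, Finset.mem_sdiff, Finset.mem_insert, Finset.mem_erase, Finset.mem_univ,
      true_and, and_true]
    tauto
  have hd5 : (Finset.univ.erase b) \ S₀ = insert a (W \ S₀) := by
    ext v
    simp only [hW, Finset.mem_sdiff, Finset.mem_insert, Finset.mem_erase, Finset.mem_univ,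
      true_and, and_true]
    by_cases hva : v = a
    · simp [hva, ha0, hab]
    · by_cases hvb : v = b
      · simp [hva, hvb, Ne.symm hab]
      · simp [hva, hvb]
  have hd6 : (Finset.univ.erase b) \ (insert a S₀) = W \ S₀ := by
    ext v
    simp only [hW, Finset.mem_sdiff, Finset.mem_insert, Finset.mem_erase, Finset.mem_univ,
      true_and, and_true]
    tauto
  -- products
  have hPa : ∏ s ∈ insert a S₀, α s = α a * ∏ s ∈ S₀, α s := Finset.prod_insert ha0
  have hPb : ∏ s ∈ insert b S₀, α s = α b * ∏ s ∈ S₀, α s := Finset.prod_insert hb0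
  have hPab : ∏ s ∈ insert b (insert a S₀), α s = α b * (α a * ∏ s ∈ S₀, α s) := by
    rw [Finset.prod_insert hbA, hPa]
  have hPα' : ∏ s ∈ S₀, α' s = ∏ s ∈ S₀, α s :=
    Finset.prod_congr rfl fun v hv => Function.update_of_ne (hSa v hv) _ _
  have hPα'2 : ∏ s ∈ insert a S₀, α' s = (α a * β b) * ∏ s ∈ S₀, α s := by
    rw [Finset.prod_insert ha0, hPα', hα']
    simp [Function.update_self]
  have hQ' : ∏ v ∈ W \ S₀, β' v = ∏ v ∈ W \ S₀, β v :=
    Finset.prod_congr rfl fun v hv =>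
      Function.update_of_ne (Finset.ne_of_mem_erase (Finset.mem_sdiff.mp hv).1) _ _
  have hB1 : ∏ v ∈ Finset.univ \ S₀, β v = β b * (β a * ∏ v ∈ W \ S₀, β v) := by
    rw [hd1, Finset.prod_insert hbiaW, Finset.prod_insert hanW]
  have hB2 : ∏ v ∈ Finset.univ \ insert a S₀, β v = β b * ∏ v ∈ W \ S₀, β v := by
    rw [hd2, Finset.prod_insert hbnW]
  have hB3 : ∏ v ∈ Finset.univ \ insert b S₀, β v = β a * ∏ v ∈ W \ S₀, β v := by
    rw [hd3, Finset.prod_insert hanW]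
  have hB4 : ∏ v ∈ Finset.univ \ insert b (insert a S₀), β v = ∏ v ∈ W \ S₀, β v := by
    rw [hd4]
  have hB5 : ∏ v ∈ Finset.univ.erase b \ S₀, β' v =
      (α a * α b * (x - 1) ^ 2 + β a * α b * (y - 1) + β a * β b) * ∏ v ∈ W \ S₀, β v := by
    rw [hd5, Finset.prod_insert hanW, hQ', hβ']
    simp [Function.update_self]
  have hB6 : ∏ v ∈ Finset.univ.erase b \ insert a S₀, β' v = ∏ v ∈ W \ S₀, β v := by
    rw [hd6, hQ']
  -- final computation
  simp only [hfdef, hgdef]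
  rw [hB1, hB2, hB3, hB4, hB5, hB6, hrb, hrab, hca, hcb, hcab, hPa, hPb, hPab, hPα', hPα'2,
    show S₀.card + 1 - mrank M S₀ = (S₀.card - mrank M S₀) + 1 from by omega,
    show S₀.card + 2 - (mrank M S₀ + 2) = S₀.card - mrank M S₀ from by omega]
  ring
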